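/- Reachability of finite fixed points: for any program P, if Δ ∈ lfp T_P* and Δ is finite, then there is a fact-set step sequence from ∅ to the erasure (Δ)⁻. -/

import Mathlib

open scoped Classical

namespace FCLP

/-! ### Terms -/

/-- Ground (Herbrand) terms: uninterpreted function symbols applied to ground terms. -/
inductive GTerm : Type where
  | func : ℕ → List GTerm → GTerm

/-- Terms possibly containing variables. -/
inductive VTerm : Type where
  | var : ℕ → VTerm
  | func : ℕ → List VTerm → VTerm

/-- A substitution is a total map from variables to ground terms. -/
abbrev Subst := ℕ → GTerm

mutual
  /-- Applying a substitution to a term. -/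
  def VTerm.subst (σ : Subst) : VTerm → GTerm
    | .var x => σ x
    | .func f args => .func f (VTerm.substList σ args)
  def VTerm.substList (σ : Subst) : List VTerm → List GTerm
    | [] => []
    | t :: ts => VTerm.subst σ t :: VTerm.substList σ ts
end

/-- The variable `x` occurs in the term. -/
inductive VTerm.HasVar : VTerm → ℕ → Prop where
  | var (x : ℕ) : VTerm.HasVar (.var x) x
  | func {f : ℕ} {args : List VTerm} {t : VTerm} {x : ℕ} :
      t ∈ args → VTerm.HasVar t x → VTerm.HasVar (.func f args) x

/-! ### Attributes, facts, rules, programs -/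

/-- An attribute `p(t₁,...,tₙ)`: a predicate applied to ground terms. -/
structure Attr where
  pred : ℕ
  args : List GTerm

/-- A fact `p(t̄) is v`. -/
structure Fact where
  attr : Attr
  value : GTerm

/-- A premise `p(t̄) is v`, possibly containing variables. -/
structure VAtom where
  pred : ℕ
  args : List VTerm
  value : VTerm

def VAtom.subst (σ : Subst) (A : VAtom) : Fact :=
  ⟨⟨A.pred, A.args.map (VTerm.subst σ)⟩, A.value.subst σ⟩

def VAtom.HasVar (A : VAtom) (x : ℕ) : Prop :=
  (∃ t ∈ A.args, t.HasVar x) ∨ A.value.HasVar x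

/-- A rule head: open `p(t̄) is? v` or closed `p(t̄) is {v₁,...,vₘ}`. -/
inductive Head : Type where
  | opn : ℕ → List VTerm → VTerm → Head
  | closed : ℕ → List VTerm → List VTerm → Head

def Head.HasVar : Head → ℕ → Prop
  | .opn _ args v, x => (∃ t ∈ args, t.HasVar x) ∨ v.HasVar x
  | .closed _ args vs, x => (∃ t ∈ args, t.HasVar x) ∨ ∃ v ∈ vs, v.HasVar x

/-- The ground attribute of a rule head under a substitution. -/
def Head.groundAttr (σ : Subst) : Head → Attr
  | .opn p args _ => ⟨p, args.map (VTerm.subst σ)⟩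
  | .closed p args _ => ⟨p, args.map (VTerm.subst σ)⟩

/-- A rule `H ← F` with a finite collection of premises. -/
structure Rule where
  head : Head
  prems : List VAtom

/-- Wellformedness: closed heads offer at least one value, and every
variable in the head occurs in a premise. -/
def Rule.WF (r : Rule) : Prop :=
  (∀ x, r.head.HasVar x → ∃ A ∈ r.prems, A.HasVar x) ∧
  (∀ p args vs, r.head = .closed p args vs → vs ≠ [])

/-- A program is a set of rules. -/
abbrev Program := Set Rule

/-- A program is a *finite* set of *wellformed* rules. -/
def Program.WFP (P : Program) : Prop := P.Finite ∧ ∀ r ∈ P, r.WF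

/-! ### Fact-set semantics -/

/-- A set of facts is consistent when each attribute has at most one value. -/
def Consistent (D : Set Fact) : Prop :=
  ∀ f ∈ D, ∀ g ∈ D, f.attr = g.attr → f = g

/-- `σ` satisfies the premises `F` in the fact-set database `D`. -/
def satF (σ : Subst) (F : List VAtom) (D : Set Fact) : Prop :=
  ∀ A ∈ F, A.subst σ ∈ D

/-- Fact-set evolution `D →_P S`. -/
inductive Evolve (P : Program) : Set Fact → Set (Set Fact) → Prop where
  | triv (D : Set Fact) : Evolve P D {D}
  | closed {D : Set Fact} {r : Rule} {p : ℕ} {args vs : List VTerm} {σ : Subst} :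
      r ∈ P → r.head = .closed p args vs → satF σ r.prems D →
      Evolve P D
        { E | ∃ v ∈ vs,
            E = insert (⟨⟨p, args.map (VTerm.subst σ)⟩, VTerm.subst σ v⟩ : Fact) D ∧
            Consistent E }
  | opn {D : Set Fact} {r : Rule} {p : ℕ} {args : List VTerm} {v : VTerm} {σ : Subst} :
      r ∈ P → r.head = .opn p args v → satF σ r.prems D →
      Evolve P D
        ({D} ∪ { E | E = insert (⟨⟨p, args.map (VTerm.subst σ)⟩, VTerm.subst σ v⟩ : Fact) D ∧
                     Consistent E })

/-- `P` allows `D` to step to `D'`. -/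
def Step (P : Program) (D D' : Set Fact) : Prop := ∃ S, Evolve P D S ∧ D' ∈ S

/-- A database is saturated when its only evolution is the singleton of itself. -/
def Saturated (P : Program) (D : Set Fact) : Prop := ∀ S, Evolve P D S → S = {D}

/-- A solution: a saturated database reachable from `∅` by a (finite) step sequence. -/
def Solution (P : Program) (D : Set Fact) : Prop :=
  Relation.ReflTransGen (Step P) ∅ D ∧ Saturated P D

/-! ### Constraints and constraint databases -/

/-- A constraint: `just t` or `noneOf X`. -/
inductive Constraint : Type where
  | just : GTerm → Constraint
  | noneOf : Set GTerm → Constraint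

/-- The order on constraints. -/
def Constraint.le : Constraint → Constraint → Prop
  | .noneOf X, .noneOf Y => X ⊆ Y
  | .noneOf X, .just t => t ∉ X
  | .just t, .just t' => t = t'
  | .just _, .noneOf _ => False

instance : LE Constraint := ⟨Constraint.le⟩

/-- Least upper bound of a (compatible) set of constraints: if some `just t` is present
it is the lub; otherwise it is `noneOf` of the union. -/
noncomputable def Constraint.lub (C : Set Constraint) : Constraint :=
  if h : ∃ t, Constraint.just t ∈ C then .just h.choose
  else .noneOf (⋃₀ { X | Constraint.noneOf X ∈ C })

/-- A constraint database: a map from ground attributes to constraints,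
ordered pointwise (via the `Pi` order). -/
abbrev CDB := Attr → Constraint

/-- The least constraint database: every attribute maps to `noneOf ∅`. -/
def cdbBot : CDB := fun _ => .noneOf ∅

/-- Pointwise least upper bound of a (compatible) set of constraint databases. -/
noncomputable def CDB.lub (S : Set CDB) : CDB :=
  fun a => Constraint.lub ((fun Δ => Δ a) '' S)

/-- A subset of a poset is compatible when it has an upper bound. -/
def Compatible {α : Type*} [LE α] (X : Set α) : Prop := ∃ y, ∀ x ∈ X, x ≤ y

/-- Binary compatibility. -/
def Compat {α : Type*} [LE α] (x y : α) : Prop := Compatible ({x, y} : Set α)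

/-- A choice set: a pairwise-incompatible set of constraint databases. -/
def IsChoiceSet (𝒞 : Set CDB) : Prop :=
  ∀ D ∈ 𝒞, ∀ E ∈ 𝒞, Compat D E → D = E

/-- The order on choice sets. -/
def ChoiceLE (𝒞₁ 𝒞₂ : Set CDB) : Prop :=
  ∀ D₂ ∈ 𝒞₂, ∃ D₁ ∈ 𝒞₁, D₁ ≤ D₂

/-- Least upper bound of an indexed family of choice sets:
`⋁ᵢ 𝒞ᵢ = { ⋁ Im(f) : f ∈ ∏ᵢ 𝒞ᵢ, Im(f) compatible }`. -/
noncomputable def ChoiceJoin {I : Type*} (𝒞 : I → Set CDB) : Set CDB :=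
  { E | ∃ f : I → CDB, (∀ i, f i ∈ 𝒞 i) ∧ Compatible (Set.range f) ∧
        E = CDB.lub (Set.range f) }

/-- Least upper bound of a set of choice sets. -/
noncomputable def ChoiceSJoin (S : Set (Set CDB)) : Set CDB :=
  ChoiceJoin (fun C : S => (C : Set CDB))

/-- Greatest lower bound of a set of choice sets:
`⋀ X = ⋁ {𝒞 : ∀ x ∈ X, 𝒞 ≤ x}` (join over choice-set lower bounds). -/
noncomputable def ChoiceMeet (S : Set (Set CDB)) : Set CDB :=
  ChoiceSJoin { C | IsChoiceSet C ∧ ∀ X ∈ S, ChoiceLE C X }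

/-! ### Immediate consequence -/

/-- `σ` satisfies `F` in the constraint database `Δ`. -/
def satC (σ : Subst) (F : List VAtom) (Δ : CDB) : Prop :=
  ∀ A ∈ F, Constraint.just (A.value.subst σ) ≤ Δ ⟨A.pred, A.args.map (VTerm.subst σ)⟩

/-- The constraint database mapping `a` to `c` and every other attribute to `noneOf ∅`. -/
noncomputable def unitCDB (a : Attr) (c : Constraint) : CDB :=
  fun a' => if a' = a then c else .noneOf ∅

/-- The choice set `⟨σH⟩` determined by a ground rule head. -/
noncomputable def headChoice (σ : Subst) : Head → Set CDB
  | .opn p args v =>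
      { unitCDB ⟨p, args.map (VTerm.subst σ)⟩ (.just (v.subst σ)),
        unitCDB ⟨p, args.map (VTerm.subst σ)⟩ (.noneOf {v.subst σ}) }
  | .closed p args vs =>
      { Δ | ∃ v ∈ vs, Δ = unitCDB ⟨p, args.map (VTerm.subst σ)⟩ (.just (v.subst σ)) }

/-- The immediate consequence operator
`T_P(Δ) = {Δ} ∨ ⋁{ ⟨σH⟩ : (H ← F) ∈ P, σ satisfies F in Δ }`. -/
noncomputable def TP (P : Program) (Δ : CDB) : Set CDB :=
  ChoiceSJoin
    (insert {Δ} { C | ∃ r ∈ P, ∃ σ : Subst, satC σ r.prems Δ ∧ C = headChoice σ r.head })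

/-- The attribute-specific immediate consequence operator `T_{P[a]}`. -/
noncomputable def TPa (P : Program) (a : Attr) (Δ : CDB) : Set CDB :=
  ChoiceSJoin
    { C | ∃ r ∈ P, ∃ σ : Subst, satC σ r.prems Δ ∧ r.head.groundAttr σ = a ∧
          C = headChoice σ r.head }

/-- The lifted immediate consequence operator `T_P*(𝒞) = ⋃_{Δ ∈ 𝒞} T_P(Δ)`. -/
noncomputable def TPs (P : Program) (𝒞 : Set CDB) : Set CDB :=
  { E | ∃ Δ ∈ 𝒞, E ∈ TP P Δ }

/-- The least fixed point of `T_P*`, defined à la Knaster–Tarski as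
`⋀ {𝒞 : T_P*(𝒞) ≤ 𝒞}`. -/
noncomputable def lfpTPs (P : Program) : Set CDB :=
  ChoiceMeet { C | IsChoiceSet C ∧ ChoiceLE (TPs P C) C }

/-! ### Positive and finite constraint databases, promotion and erasure -/

/-- A constraint database is positive when `noneOf X` only occurs with `X = ∅`. -/
def CDBPositive (Δ : CDB) : Prop := ∀ a X, Δ a = .noneOf X → X = ∅

/-- A constraint database is finite. -/
def CDBFinite (Δ : CDB) : Prop :=
  { a | Δ a ≠ .noneOf ∅ }.Finite ∧ ∀ a X, Δ a = .noneOf X → X.Finite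

/-- Promotion of a (consistent) fact set to a constraint database. -/
noncomputable def promote (D : Set Fact) : CDB :=
  fun a => if h : ∃ v, (⟨a, v⟩ : Fact) ∈ D then .just h.choose else .noneOf ∅

/-- Erasure of a constraint database to a fact set. -/
def eraseCDB (Δ : CDB) : Set Fact := { f | Δ f.attr = .just f.value }

/-! ### The abstract algorithm -/

/-- `P` allows `Δ` to take an algorithmic step to any `Δ' ∈ {Δ} ∨ T_{P[a]}(Δ)`
for some attribute `a`, provided `T_P(Δ) ≠ ∅`. -/
noncomputable def AlgStep (P : Program) (Δ Δ' : CDB) : Prop :=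
  TP P Δ ≠ ∅ ∧ ∃ a : Attr, Δ' ∈ ChoiceSJoin {({Δ} : Set CDB), TPa P a Δ}

/-! ### Datalog -/

/-- A datalog atom, possibly with variables. -/
structure DAtom where
  pred : ℕ
  args : List VTerm

/-- A ground datalog atom. -/
structure GAtom where
  pred : ℕ
  args : List GTerm

def DAtom.subst (σ : Subst) (A : DAtom) : GAtom := ⟨A.pred, A.args.map (VTerm.subst σ)⟩

/-- A datalog rule `p(t̄) ← p₁(t̄₁), ..., pₙ(t̄ₙ)`. -/
structure DRule where
  head : DAtom
  prems : List DAtom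

/-- Every variable of the head appears in a premise. -/
def DRule.WF (r : DRule) : Prop :=
  ∀ x, (∃ t ∈ r.head.args, t.HasVar x) → ∃ A ∈ r.prems, ∃ t ∈ A.args, t.HasVar x

/-- The datalog immediate consequence operator. -/
def dImmCons (P : Set DRule) (X : Set GAtom) : Set GAtom :=
  { g | ∃ r ∈ P, ∃ σ : Subst, (∀ A ∈ r.prems, A.subst σ ∈ X) ∧ g = r.head.subst σ }

/-- The least model of a datalog program: the least fixed point of `dImmCons`. -/
def dModel (P : Set DRule) : Set GAtom := ⋂₀ { X | dImmCons P X ⊆ X }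

/-- Translation of a datalog program to a finite-choice logic program, using the
constant with (fresh) function symbol `u` as the value `unit`. -/
def trDatalog (u : ℕ) (P : Set DRule) : Program :=
  { r | ∃ dr ∈ P,
      r = ⟨Head.closed dr.head.pred dr.head.args [VTerm.func u []],
           dr.prems.map (fun A => ⟨A.pred, A.args, VTerm.func u []⟩)⟩ }

/-! ### Answer set programming -/

/-- A ground ASP rule `p ← p₁,...,pₙ, ¬q₁,...,¬qₘ` over propositional atoms. -/
structure ASPRule where
  head : ℕ
  pos : List ℕ
  neg : List ℕ

/-- One step of the immediate consequence operator of the reduct `P^X`. -/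
def reductCons (P : Set ASPRule) (X : Set ℕ) (Y : Set ℕ) : Set ℕ :=
  { p | ∃ r ∈ P, r.head = p ∧ (∀ q ∈ r.pos, q ∈ Y) ∧ (∀ q ∈ r.neg, q ∉ X) }

/-- The least model of the reduct `P^X`. -/
def reductModel (P : Set ASPRule) (X : Set ℕ) : Set ℕ :=
  ⋂₀ { Y | reductCons P X Y ⊆ Y }

/-- `X` is a stable model of `P` when the least model of the reduct `P^X` equals `X`. -/
def StableModel (P : Set ASPRule) (X : Set ℕ) : Prop := reductModel P X = X

/-- The fresh constant `tt` (as a ground term). -/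
def ttT : GTerm := .func 0 []
/-- The fresh constant `ff` (as a ground term). -/
def ffT : GTerm := .func 1 []
/-- The constant `tt` as a (closed) term of the rule language. -/
def ttV : VTerm := .func 0 []
/-- The constant `ff` as a (closed) term of the rule language. -/
def ffV : VTerm := .func 1 []

/-- The premise `p is tt`. -/
def posPrem (p : ℕ) : VAtom := ⟨p, [], ttV⟩
/-- The premise `q is ff`. -/
def negPrem (q : ℕ) : VAtom := ⟨q, [], ffV⟩

/-- Translation of an ASP program to a finite-choice logic program: each rule
`p ← p₁,...,pₙ, ¬q₁,...,¬qₘ` becomes `m` open rules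
`qⱼ is? ff ← p₁ is tt,...,pₙ is tt, q₁ is ff,...,q_{j-1} is ff` and one closed rule
`p is {tt} ← p₁ is tt,...,pₙ is tt, q₁ is ff,...,qₘ is ff`. -/
def trASP (P : Set ASPRule) : Program :=
  { r | ∃ ar ∈ P,
      (∃ j : Fin ar.neg.length,
        r = ⟨Head.opn (ar.neg.get j) [] ffV,
             ar.pos.map posPrem ++ (ar.neg.take j.val).map negPrem⟩) ∨
      r = ⟨Head.closed ar.head [] [ttV],
           ar.pos.map posPrem ++ ar.neg.map negPrem⟩ }

/-! An element `Δ` of `lfp T_P*` is the join of a chain `d₀ = ⊥`, `dₙ₊₁ ∈ T_P(dₙ)` drawn from the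
Kleene iterates `T_P*ⁿ{⊥}`: their join is itself a prefixed choice set, so the least fixed point
lies below it, which pins `Δ` to the join of its components at the iterates. A `just` fact of
`dₙ₊₁` that is not in `dₙ` is offered by a rule head whose premises already hold in `dₙ`, so it can
be added by one fact-set step; and since `Δ` is finite its erasure is already the erasure of some
`d_N`. -/

open Set

namespace Constraint

theorem just_le_iff {t : GTerm} {c : Constraint} : just t ≤ c ↔ c = just t := by
  cases c with
  | just t' => exact ⟨fun h => congrArg just h.symm, fun h => (just.inj h).symm⟩
  | noneOf X => exact ⟨False.elim, fun h => nomatch h⟩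

instance : PartialOrder Constraint where
  le := (· ≤ ·)
  le_refl c := by
    cases c with
    | just t => exact just_le_iff.2 rfl
    | noneOf X => exact subset_refl X
  le_trans a b c hab hbc := by
    cases a with
    | just t =>
      obtain rfl := just_le_iff.1 hab
      exact hbc
    | noneOf X =>
      cases b with
      | just t => exact just_le_iff.1 hbc ▸ hab
      | noneOf Y =>
        cases c with
        | just t => exact fun htX => hbc (hab htX)
        | noneOf Z => exact fun x hxX => hbc (hab hxX)
  le_antisymm a b hab hba := by
    cases a with
    | just t => exact (just_le_iff.1 hab).symm
    | noneOf X =>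
      cases b with
      | just t => exact absurd hba id
      | noneOf Y => exact congrArg noneOf (subset_antisymm hab hba)

theorem noneOf_empty_le (c : Constraint) : noneOf ∅ ≤ c := by
  cases c with
  | just t => exact notMem_empty t
  | noneOf X => exact empty_subset X

theorem lub_le {S : Set Constraint} {u : Constraint} (h : ∀ c ∈ S, c ≤ u) : lub S ≤ u := by
  unfold lub
  split_ifs with hjust
  · exact h _ hjust.choose_spec
  · cases u with
    | just s => exact fun ⟨X, hX, hsX⟩ => h _ hX hsX
    | noneOf Y => exact fun x ⟨X, hX, hxX⟩ => h _ hX hxX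

theorem le_lub {S : Set Constraint} (hS : Compatible S) {c : Constraint} (hc : c ∈ S) :
    c ≤ lub S := by
  obtain ⟨u, hu⟩ := hS
  unfold lub
  split_ifs with hjust
  · exact just_le_iff.1 (hu _ hjust.choose_spec) ▸ hu c hc
  · cases c with
    | just t => exact absurd ⟨t, hc⟩ hjust
    | noneOf X => exact subset_sUnion_of_mem hc

theorem just_mem_of_lub_eq {S : Set Constraint} {t : GTerm} (h : lub S = just t) :
    just t ∈ S := by
  unfold lub at h
  split_ifs at h with hjust
  cases h
  exact hjust.choose_spec

end Constraint

theorem CDB.lub_le {S : Set CDB} {u : CDB} (h : ∀ d ∈ S, d ≤ u) : CDB.lub S ≤ u :=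
  fun a => Constraint.lub_le (by rintro _ ⟨d, hd, rfl⟩; exact h d hd a)

theorem CDB.le_lub {S : Set CDB} (hS : Compatible S) {d : CDB} (hd : d ∈ S) : d ≤ CDB.lub S := by
  obtain ⟨u, hu⟩ := hS
  exact fun a => Constraint.le_lub ⟨u a, by rintro _ ⟨e, he, rfl⟩; exact hu e he a⟩ ⟨d, hd, rfl⟩

theorem CDB.exists_mem_eq_just_of_lub_eq {S : Set CDB} {a : Attr} {t : GTerm}
    (h : CDB.lub S a = .just t) : ∃ d ∈ S, d a = .just t :=
  Constraint.just_mem_of_lub_eq h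

theorem cdbBot_le (d : CDB) : cdbBot ≤ d := fun a => Constraint.noneOf_empty_le (d a)

theorem Compat.of_le {α : Type*} [LE α] {x y u : α} (hx : x ≤ u) (hy : y ≤ u) : Compat x y :=
  ⟨u, by rintro z (rfl | rfl) <;> assumption⟩

theorem IsChoiceSet.eq_of_le {𝒞 : Set CDB} (h𝒞 : IsChoiceSet 𝒞) {D E u : CDB} (hD : D ∈ 𝒞)
    (hE : E ∈ 𝒞) (hDu : D ≤ u) (hEu : E ≤ u) : D = E :=
  h𝒞 D hD E hE (Compat.of_le hDu hEu)

theorem isChoiceSet_of_le {𝒞 : Set CDB}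
    (h : ∀ D ∈ 𝒞, ∀ E ∈ 𝒞, ∀ u, D ≤ u → E ≤ u → D = E) : IsChoiceSet 𝒞 := by
  rintro D hD E hE ⟨u, hu⟩
  exact h D hD E hE u (hu D (mem_insert _ _)) (hu E (mem_insert_of_mem _ rfl))

section ChoiceJoin

variable {I : Type*} {𝒞 : I → Set CDB}

theorem choiceLE_choiceJoin (i : I) : ChoiceLE (𝒞 i) (ChoiceJoin 𝒞) := by
  rintro _ ⟨f, hf, hcomp, rfl⟩
  exact ⟨f i, hf i, CDB.le_lub hcomp ⟨i, rfl⟩⟩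

theorem exists_mem_choiceJoin_le {u : CDB} (h : ∀ i, ∃ p ∈ 𝒞 i, p ≤ u) :
    ∃ E ∈ ChoiceJoin 𝒞, E ≤ u := by
  choose f hf hfu using h
  have hub : ∀ d ∈ range f, d ≤ u := by rintro _ ⟨i, rfl⟩; exact hfu i
  exact ⟨_, ⟨f, hf, ⟨u, hub⟩, rfl⟩, CDB.lub_le hub⟩

theorem exists_eq_just_of_mem_choiceJoin {E : CDB} (hE : E ∈ ChoiceJoin 𝒞) {a : Attr}
    {t : GTerm} (ha : E a = .just t) : ∃ i, ∃ x ∈ 𝒞 i, x a = .just t := by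
  obtain ⟨f, hf, -, rfl⟩ := hE
  obtain ⟨_, ⟨i, rfl⟩, hi⟩ := CDB.exists_mem_eq_just_of_lub_eq ha
  exact ⟨i, f i, hf i, hi⟩

theorem IsChoiceSet.choiceJoin (h : ∀ i, IsChoiceSet (𝒞 i)) : IsChoiceSet (ChoiceJoin 𝒞) := by
  refine isChoiceSet_of_le ?_
  rintro _ ⟨f, hf, hfc, rfl⟩ _ ⟨g, hg, hgc, rfl⟩ u hfu hgu
  have hfg : f = g := funext fun i =>
    (h i).eq_of_le (hf i) (hg i) ((CDB.le_lub hfc ⟨i, rfl⟩).trans hfu)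
      ((CDB.le_lub hgc ⟨i, rfl⟩).trans hgu)
  rw [hfg]

end ChoiceJoin

theorem unitCDB_self (a : Attr) (c : Constraint) : unitCDB a c a = c := if_pos rfl

theorem unitCDB_eq_just_iff {a a' : Attr} {c : Constraint} {t : GTerm} :
    unitCDB a c a' = .just t ↔ a' = a ∧ c = .just t := by
  unfold unitCDB
  split_ifs with h <;> simp [h]

theorem isChoiceSet_headChoice (σ : Subst) (H : Head) : IsChoiceSet (headChoice σ H) := by
  refine isChoiceSet_of_le ?_
  cases H with
  | opn p args v =>
    set a : Attr := ⟨p, args.map (VTerm.subst σ)⟩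
    have hincompat : ∀ u : CDB, unitCDB a (.just (v.subst σ)) ≤ u →
        ¬ unitCDB a (.noneOf {v.subst σ}) ≤ u := fun u hj hn => by
      have hja := hj a
      have hna := hn a
      rw [unitCDB_self, Constraint.just_le_iff] at hja
      rw [unitCDB_self, hja] at hna
      exact hna rfl
    rintro D (rfl | rfl) E (rfl | rfl) u hD hE
    exacts [rfl, absurd hE (hincompat u hD), absurd hD (hincompat u hE), rfl]
  | closed p args vs =>
    rintro _ ⟨v, -, rfl⟩ _ ⟨w, -, rfl⟩ u hv hw
    set a : Attr := ⟨p, args.map (VTerm.subst σ)⟩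
    have hva := hv a
    have hwa := hw a
    rw [unitCDB_self, Constraint.just_le_iff] at hva hwa
    rw [Constraint.just.inj (hva.symm.trans hwa)]

def TPFamily (P : Program) (Δ : CDB) : Set (Set CDB) :=
  insert {Δ} { C | ∃ r ∈ P, ∃ σ : Subst, satC σ r.prems Δ ∧ C = headChoice σ r.head }

section ImmediateConsequence

variable {P : Program}

theorem satC_mono {σ : Subst} {F : List VAtom} {Δ₁ Δ₂ : CDB} (h : satC σ F Δ₁) (hle : Δ₁ ≤ Δ₂) :
    satC σ F Δ₂ :=
  fun A hA => (h A hA).trans (hle _)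

theorem choiceLE_TP {Δ : CDB} {C : Set CDB} (hC : C ∈ TPFamily P Δ) : ChoiceLE C (TP P Δ) :=
  choiceLE_choiceJoin (𝒞 := fun C : TPFamily P Δ => (C : Set CDB)) ⟨C, hC⟩

theorem le_of_mem_TP {Δ E : CDB} (hE : E ∈ TP P Δ) : Δ ≤ E := by
  obtain ⟨p, hp, hpE⟩ := choiceLE_TP (mem_insert _ _) E hE
  exact (mem_singleton_iff.1 hp) ▸ hpE

theorem exists_headChoice_le_of_mem_TP {Δ E : CDB} (hE : E ∈ TP P Δ) {r : Rule} (hr : r ∈ P)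
    {σ : Subst} (hσ : satC σ r.prems Δ) : ∃ p ∈ headChoice σ r.head, p ≤ E :=
  choiceLE_TP (mem_insert_of_mem _ ⟨r, hr, σ, hσ, rfl⟩) E hE

theorem isChoiceSet_TP (Δ : CDB) : IsChoiceSet (TP P Δ) := by
  refine IsChoiceSet.choiceJoin ?_
  rintro ⟨C, rfl | ⟨r, -, σ, -, rfl⟩⟩
  · exact isChoiceSet_of_le fun D hD E hE _ _ _ => (mem_singleton_iff.1 hD).trans hE.symm
  · exact isChoiceSet_headChoice σ r.head

theorem exists_mem_TP_le {Δ₁ Δ₂ E₂ : CDB} (hle : Δ₁ ≤ Δ₂) (hE₂ : E₂ ∈ TP P Δ₂) :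
    ∃ E₁ ∈ TP P Δ₁, E₁ ≤ E₂ := by
  refine exists_mem_choiceJoin_le ?_
  rintro ⟨C, rfl | ⟨r, hr, σ, hσ, rfl⟩⟩
  · exact ⟨Δ₁, rfl, hle.trans (le_of_mem_TP hE₂)⟩
  · exact exists_headChoice_le_of_mem_TP hE₂ hr (satC_mono hσ hle)

theorem self_mem_TP {Δ : CDB}
    (h : ∀ r ∈ P, ∀ σ, satC σ r.prems Δ → ∃ p ∈ headChoice σ r.head, p ≤ Δ) : Δ ∈ TP P Δ := by
  obtain ⟨E, hE, hEΔ⟩ := exists_mem_choiceJoin_le (𝒞 := fun C : TPFamily P Δ => (C : Set CDB))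
    (u := Δ) (by
      rintro ⟨C, rfl | ⟨r, hr, σ, hσ, rfl⟩⟩
      · exact ⟨Δ, rfl, le_rfl⟩
      · exact h r hr σ hσ)
  exact (le_antisymm (le_of_mem_TP hE) hEΔ) ▸ hE

theorem isChoiceSet_TPs {𝒞 : Set CDB} (h𝒞 : IsChoiceSet 𝒞) : IsChoiceSet (TPs P 𝒞) := by
  refine isChoiceSet_of_le ?_
  rintro D ⟨Δ, hΔ, hD⟩ E ⟨Δ', hΔ', hE⟩ u hDu hEu
  obtain rfl := h𝒞.eq_of_le hΔ hΔ' ((le_of_mem_TP hD).trans hDu) ((le_of_mem_TP hE).trans hEu)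
  exact (isChoiceSet_TP Δ).eq_of_le hD hE hDu hEu

theorem TPs_mono {𝒞₁ 𝒞₂ : Set CDB} (h : ChoiceLE 𝒞₁ 𝒞₂) : ChoiceLE (TPs P 𝒞₁) (TPs P 𝒞₂) := by
  rintro E₂ ⟨Δ₂, hΔ₂, hE₂⟩
  obtain ⟨Δ₁, hΔ₁, hle⟩ := h Δ₂ hΔ₂
  obtain ⟨E₁, hE₁, hE₁le⟩ := exists_mem_TP_le hle hE₂
  exact ⟨E₁, ⟨Δ₁, hΔ₁, hE₁⟩, hE₁le⟩

end ImmediateConsequence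

section Iterates

variable {P : Program}

def TPsIter (P : Program) (n : ℕ) : Set CDB := (TPs P)^[n] {cdbBot}

theorem TPsIter_succ (n : ℕ) : TPsIter P (n + 1) = TPs P (TPsIter P n) :=
  Function.iterate_succ_apply' _ _ _

theorem isChoiceSet_TPsIter (n : ℕ) : IsChoiceSet (TPsIter P n) := by
  induction n with
  | zero => exact isChoiceSet_of_le fun D hD E hE _ _ _ => hD.trans hE.symm
  | succ n ih => exact TPsIter_succ n ▸ isChoiceSet_TPs ih

theorem choiceLE_TPsIter {𝒞 : Set CDB} (h𝒞 : ChoiceLE (TPs P 𝒞) 𝒞) (n : ℕ) :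
    ChoiceLE (TPsIter P n) 𝒞 := by
  induction n with
  | zero => exact fun D _ => ⟨cdbBot, rfl, cdbBot_le D⟩
  | succ n ih =>
    rw [TPsIter_succ]
    intro D hD
    obtain ⟨D₁, hD₁, hle₁⟩ := h𝒞 D hD
    obtain ⟨D₀, hD₀, hle₀⟩ := TPs_mono ih D₁ hD₁
    exact ⟨D₀, hD₀, hle₀.trans hle₁⟩

theorem mem_TP_of_mem_TPsIter {e : ℕ → CDB} {u : CDB} (he : ∀ n, e n ∈ TPsIter P n)
    (hu : ∀ n, e n ≤ u) (n : ℕ) : e (n + 1) ∈ TP P (e n) := by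
  obtain ⟨e', he', hmem⟩ := TPsIter_succ (P := P) n ▸ he (n + 1)
  obtain rfl :=
    (isChoiceSet_TPsIter n).eq_of_le he' (he n) ((le_of_mem_TP hmem).trans (hu _)) (hu n)
  exact hmem

end Iterates

section Erasure

theorem satC_iff_satF_eraseCDB {σ : Subst} {F : List VAtom} {Δ : CDB} :
    satC σ F Δ ↔ satF σ F (eraseCDB Δ) :=
  forall₂_congr fun _ _ => Constraint.just_le_iff

theorem eraseCDB_mono {d e : CDB} (h : d ≤ e) : eraseCDB d ⊆ eraseCDB e :=
  fun f hf => Constraint.just_le_iff.1 (hf ▸ h f.attr)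

theorem eraseCDB_cdbBot : eraseCDB cdbBot = ∅ :=
  eq_empty_of_forall_notMem fun _ hf => nomatch hf

theorem consistent_eraseCDB (Δ : CDB) : Consistent (eraseCDB Δ) := by
  rintro ⟨a, v⟩ hf ⟨_, w⟩ hg (rfl : a = _)
  obtain rfl : v = w := Constraint.just.inj (hf.symm.trans hg)
  rfl

theorem eraseCDB_lub_range {I : Type*} {f : I → CDB} (hf : Compatible (range f)) :
    eraseCDB (CDB.lub (range f)) = ⋃ i, eraseCDB (f i) := by
  refine subset_antisymm (fun g hg => ?_)
    (iUnion_subset fun i => eraseCDB_mono (CDB.le_lub hf ⟨i, rfl⟩))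
  obtain ⟨_, ⟨i, rfl⟩, hi⟩ := CDB.exists_mem_eq_just_of_lub_eq hg
  exact mem_iUnion.2 ⟨i, hi⟩

theorem finite_eraseCDB {Δ : CDB} (h : { a | Δ a ≠ .noneOf ∅ }.Finite) :
    (eraseCDB Δ).Finite := by
  refine Finite.of_finite_image (h.subset ?_) (consistent_eraseCDB Δ)
  rintro _ ⟨f, hf, rfl⟩ hnone
  exact nomatch hf.symm.trans hnone

end Erasure

theorem _root_.Directed.exists_subset_of_finite_subset_iUnion {α ι : Type*} [Nonempty ι]
    {s : ι → Set α} (hs : Directed (· ⊆ ·) s) {t : Set α} (ht : t.Finite) (h : t ⊆ ⋃ i, s i) :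
    ∃ i, t ⊆ s i := by
  simpa using hs.exists_mem_subset_of_finset_subset_biUnion (s := ht.toFinset) (by simpa using h)

section Limit

variable {P : Program}

theorem exists_satC_of_satC_lub {e : ℕ → CDB} (hmono : Monotone e) (hcomp : Compatible (range e))
    {σ : Subst} {F : List VAtom} (hσ : satC σ F (CDB.lub (range e))) : ∃ N, satC σ F (e N) := by
  rw [satC_iff_satF_eraseCDB, eraseCDB_lub_range hcomp] at hσ
  have hdir : Directed (· ⊆ ·) fun n => eraseCDB (e n) :=
    Monotone.directed_le fun _ _ hmn => eraseCDB_mono (hmono hmn)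
  obtain ⟨N, hN⟩ := hdir.exists_subset_of_finite_subset_iUnion
    (F.finite_toSet.image (VAtom.subst σ)) (image_subset_iff.2 hσ)
  exact ⟨N, satC_iff_satF_eraseCDB.2 (image_subset_iff.1 hN)⟩

theorem lub_mem_TP_lub {e : ℕ → CDB} (he : ∀ n, e n ∈ TPsIter P n) (hcomp : Compatible (range e)) :
    CDB.lub (range e) ∈ TP P (CDB.lub (range e)) := by
  have hub (n : ℕ) : e n ≤ CDB.lub (range e) := CDB.le_lub hcomp ⟨n, rfl⟩
  have hchain := mem_TP_of_mem_TPsIter he hub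
  have hmono : Monotone e := monotone_nat_of_le_succ fun n => le_of_mem_TP (hchain n)
  refine self_mem_TP fun r hr σ hσ => ?_
  obtain ⟨N, hN⟩ := exists_satC_of_satC_lub hmono hcomp hσ
  obtain ⟨p, hp, hpe⟩ := exists_headChoice_le_of_mem_TP (hchain N) hr hN
  exact ⟨p, hp, hpe.trans (hub (N + 1))⟩

theorem choiceJoin_TPsIter_prefixed :
    ChoiceLE (TPs P (ChoiceJoin (TPsIter P))) (ChoiceJoin (TPsIter P)) := by
  intro D hD
  obtain ⟨e, he, hcomp, rfl⟩ := id hD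
  exact ⟨_, ⟨_, hD, lub_mem_TP_lub he hcomp⟩, le_rfl⟩

theorem exists_TPsIter_chain_of_mem_lfpTPs {Δ : CDB} (h : Δ ∈ lfpTPs P) :
    ∃ d : ℕ → CDB, (∀ n, d n ∈ TPsIter P n) ∧ (∀ n, d n ≤ Δ) ∧ Δ ≤ CDB.lub (range d) := by
  obtain ⟨F, hF, hFcomp, rfl⟩ := h
  have hFle := fun C => CDB.le_lub hFcomp (mem_range_self C)
  let i (n : ℕ) : { C | IsChoiceSet C ∧ ∀ X ∈ { C | IsChoiceSet C ∧ ChoiceLE (TPs P C) C },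
      ChoiceLE C X } := ⟨TPsIter P n, isChoiceSet_TPsIter n, fun _ h𝒞 => choiceLE_TPsIter h𝒞.2 n⟩
  let d (n : ℕ) : CDB := F (i n)
  have hd (n : ℕ) : d n ∈ TPsIter P n := hF (i n)
  have hdcomp : Compatible (range d) := ⟨_, forall_mem_range.2 fun n => hFle _⟩
  refine ⟨d, hd, fun n => hFle _, CDB.lub_le ?_⟩
  rintro _ ⟨⟨C, hCchoice, hClb⟩, rfl⟩
  -- `⋁ₙ dₙ` lies in the prefixed choice set `⋁ₙ T_P*ⁿ{⊥}`, so `C` has an element below it,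
  -- which is compatible with, hence equal to, the component of `Δ` in `C`.
  obtain ⟨c, hc, hcd⟩ := hClb _ ⟨IsChoiceSet.choiceJoin isChoiceSet_TPsIter,
    choiceJoin_TPsIter_prefixed⟩ _ ⟨d, hd, hdcomp, rfl⟩
  have hdF : CDB.lub (range d) ≤ CDB.lub (range F) :=
    CDB.lub_le (forall_mem_range.2 fun n => hFle _)
  rwa [hCchoice.eq_of_le (hF ⟨C, hCchoice, hClb⟩) hc (hFle _) (hcd.trans hdF)]

end Limit

section Reachability

variable {P : Program}

theorem Consistent.subset {D E : Set Fact} (hE : Consistent E) (h : D ⊆ E) : Consistent D :=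
  fun f hf g hg => hE f (h hf) g (h hg)

theorem step_insert_of_mem_headChoice {D : Set Fact} {r : Rule} (hr : r ∈ P) {σ : Subst}
    (hσ : satF σ r.prems D) {x : CDB} (hx : x ∈ headChoice σ r.head) {a : Attr} {t : GTerm}
    (hxa : x a = .just t) (hcons : Consistent (insert ⟨a, t⟩ D)) :
    Step P D (insert ⟨a, t⟩ D) := by
  cases hh : r.head with
  | opn p args v =>
    rw [hh] at hx
    rcases hx with rfl | rfl
    · obtain ⟨rfl, hvt⟩ := unitCDB_eq_just_iff.1 hxa
      obtain rfl := Constraint.just.inj hvt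
      exact ⟨_, Evolve.opn hr hh hσ, Or.inr ⟨rfl, hcons⟩⟩
    · exact nomatch (unitCDB_eq_just_iff.1 hxa).2
  | closed p args vs =>
    rw [hh] at hx
    obtain ⟨v, hv, rfl⟩ := hx
    obtain ⟨rfl, hvt⟩ := unitCDB_eq_just_iff.1 hxa
    obtain rfl := Constraint.just.inj hvt
    exact ⟨_, Evolve.closed hr hh hσ, v, hv, rfl, hcons⟩

theorem step_insert_of_mem_TP {d d' : CDB} (hd' : d' ∈ TP P d) {D : Set Fact}
    (hdD : eraseCDB d ⊆ D) (hDd' : D ⊆ eraseCDB d') {g : Fact} (hg : g ∈ eraseCDB d')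
    (hgd : g ∉ eraseCDB d) : Step P D (insert g D) := by
  obtain ⟨a, t⟩ := g
  have hcons := (consistent_eraseCDB d').subset (insert_subset hg hDd')
  obtain ⟨⟨C, hC⟩, x, hx, hxa⟩ := exists_eq_just_of_mem_choiceJoin hd' hg
  rcases hC with rfl | ⟨r, hr, σ, hσ, rfl⟩
  · exact absurd (mem_singleton_iff.1 hx ▸ hxa) hgd
  · exact step_insert_of_mem_headChoice hr
      (fun A hA => hdD (satC_iff_satF_eraseCDB.1 hσ A hA)) hx hxa hcons

theorem reflTransGen_union_of_finite {α : Type*} {r : Set α → Set α → Prop} {A s : Set α}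
    (hs : s.Finite) (h : ∀ D, A ⊆ D → D ⊆ A ∪ s → ∀ g ∈ s, r D (insert g D)) :
    Relation.ReflTransGen r A (A ∪ s) := by
  refine hs.induction_on_subset (motive := fun t _ => Relation.ReflTransGen r A (A ∪ t)) s
    (by rw [union_empty]) fun hgs hts _ ih => ?_
  rw [union_insert]
  exact ih.tail (h _ subset_union_left (union_subset_union_right A hts) _ hgs)

theorem reflTransGen_step_eraseCDB_of_mem_TP {d d' : CDB} (hd' : d' ∈ TP P d)
    (hfin : (eraseCDB d').Finite) :
    Relation.ReflTransGen (Step P) (eraseCDB d) (eraseCDB d') := by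
  have hsub := eraseCDB_mono (le_of_mem_TP hd')
  rw [← union_sdiff_cancel hsub]
  exact reflTransGen_union_of_finite hfin.sdiff fun D hdD hD g hg =>
    step_insert_of_mem_TP hd' hdD (hD.trans (union_subset hsub sdiff_subset)) hg.1 hg.2

theorem reflTransGen_step_eraseCDB_of_chain {d : ℕ → CDB} (h₀ : d 0 = cdbBot)
    (hchain : ∀ n, d (n + 1) ∈ TP P (d n)) (hfin : ∀ n, (eraseCDB (d n)).Finite) (n : ℕ) :
    Relation.ReflTransGen (Step P) ∅ (eraseCDB (d n)) := by
  induction n with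
  | zero => rw [h₀, eraseCDB_cdbBot]
  | succ n ih => exact ih.trans (reflTransGen_step_eraseCDB_of_mem_TP (hchain n) (hfin _))

end Reachability

/-- Reachability of finite fixed points: any finite `Δ ∈ lfp T_P*` has a fact-set
step sequence from `∅` to its erasure. -/
theorem finite_fixed_points_reachable (P : Program) (hP : Program.WFP P) (Δ : CDB)
    (h₁ : Δ ∈ lfpTPs P) (h₂ : CDBFinite Δ) :
    Relation.ReflTransGen (Step P) ∅ (eraseCDB Δ) := by
  obtain ⟨d, hdIter, hdΔ, hΔd⟩ := exists_TPsIter_chain_of_mem_lfpTPs h₁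
  have hchain := mem_TP_of_mem_TPsIter hdIter hdΔ
  have hfin := finite_eraseCDB h₂.1
  have hdir : Directed (· ⊆ ·) fun n => eraseCDB (d n) := Monotone.directed_le <|
    monotone_nat_of_le_succ fun n => eraseCDB_mono (le_of_mem_TP (hchain n))
  have hcover : eraseCDB Δ ⊆ ⋃ n, eraseCDB (d n) :=
    eraseCDB_lub_range ⟨Δ, forall_mem_range.2 hdΔ⟩ ▸ eraseCDB_mono hΔd
  obtain ⟨N, hN⟩ := hdir.exists_subset_of_finite_subset_iUnion hfin hcover
  rw [← (eraseCDB_mono (hdΔ N)).antisymm hN]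
  exact reflTransGen_step_eraseCDB_of_chain (hdIter 0) hchain
    (fun n => hfin.subset (eraseCDB_mono (hdΔ n))) N

end FCLP
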